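/- Let ρ, σ be density matrices on ℂ^d and let H be a Hermitian d×d matrix with eigenvalues E_0 ≤ E_1 ≤ ⋯ ≤ E_{d−1} listed in increasing order. Let λ_0(ρ) ≥ ⋯ ≥ λ_{d−1}(ρ) and λ_0(σ) ≥ ⋯ ≥ λ_{d−1}(σ) be the eigenvalues of ρ and σ listed in decreasing order. Then |Σ_{i=0}^{d−1} (λ_i(ρ) − λ_i(σ)) E_i| ≤ (E_{d−1} − E_0) · D_Tr(ρ,σ). (This bounds the difference of the passive-state energies tr[(ρ↓ − σ↓)H] in terms of the trace distance between the states.) -/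

import Mathlib

open scoped BigOperators ComplexOrder
open Matrix

/-- The eigenvalues of a Hermitian matrix, listed in increasing order
(junk value `0` for non-Hermitian matrices). -/
noncomputable def eigsInc {d : ℕ} (A : Matrix (Fin d) (Fin d) ℂ) : Fin d → ℝ :=
  @dite _ A.IsHermitian (Classical.propDecidable _)
    (fun h => h.eigenvalues ∘ Tuple.sort h.eigenvalues) (fun _ => 0)

/-- The eigenvalues of a Hermitian matrix, listed in decreasing order. -/
noncomputable def eigsDec {d : ℕ} (A : Matrix (Fin d) (Fin d) ℂ) : Fin d → ℝ :=
  fun k => eigsInc A k.rev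

/-- Ergotropy `E(ρ,H) = tr(ρH) - ∑ₖ λₖ Eₖ` with `λ` decreasing, `E` increasing. -/
noncomputable def ergotropy {d : ℕ} (ρ H : Matrix (Fin d) (Fin d) ℂ) : ℝ :=
  ((ρ * H).trace).re - ∑ k : Fin d, eigsDec ρ k * eigsInc H k

/-- Operator norm (ℓ² → ℓ²) of a matrix. -/
noncomputable def opNorm {d : ℕ} (A : Matrix (Fin d) (Fin d) ℂ) : ℝ :=
  ‖Matrix.toEuclideanCLM (𝕜 := ℂ) A‖

/-- The positive semidefinite square root of a positive semidefinite matrix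
(the definition `Matrix.PosSemidef.sqrt` of the older Mathlib, removed since). -/
noncomputable def Matrix.PosSemidef.sqrt {n 𝕜 : Type*} [Fintype n] [DecidableEq n] [RCLike 𝕜]
    {A : Matrix n n 𝕜} (hA : A.PosSemidef) : Matrix n n 𝕜 :=
  hA.1.eigenvectorUnitary.1 * diagonal ((↑) ∘ (Real.sqrt ·) ∘ hA.1.eigenvalues) *
    (star hA.1.eigenvectorUnitary : Matrix n n 𝕜)

/-- Trace norm `‖A‖₁ = tr √(AᴴA)`. -/
noncomputable def traceNorm {d : ℕ} (A : Matrix (Fin d) (Fin d) ℂ) : ℝ :=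
  ((Matrix.posSemidef_conjTranspose_mul_self A).sqrt.trace).re

/-- Trace distance. -/
noncomputable def traceDist {d : ℕ} (ρ σ : Matrix (Fin d) (Fin d) ℂ) : ℝ :=
  traceNorm (ρ - σ) / 2

/-- Positive semidefinite square root (junk value `0` on non-PSD matrices). -/
noncomputable def psdSqrt {d : ℕ} (A : Matrix (Fin d) (Fin d) ℂ) : Matrix (Fin d) (Fin d) ℂ :=
  @dite _ A.PosSemidef (Classical.propDecidable _) (fun h => h.sqrt) (fun _ => 0)

/-- Uhlmann fidelity `F(ρ,σ) = (tr √(√ρ σ √ρ))²`. -/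
noncomputable def fidelity {d : ℕ} (ρ σ : Matrix (Fin d) (Fin d) ℂ) : ℝ :=
  ((psdSqrt (psdSqrt ρ * σ * psdSqrt ρ)).trace).re ^ 2

/-- Bures distance. -/
noncomputable def buresDist {d : ℕ} (ρ σ : Matrix (Fin d) (Fin d) ℂ) : ℝ :=
  Real.sqrt (2 - 2 * Real.sqrt (fidelity ρ σ))

/-- Hilbert–Schmidt distance. -/
noncomputable def hsDist {d : ℕ} (ρ σ : Matrix (Fin d) (Fin d) ℂ) : ℝ :=
  Real.sqrt ((((ρ - σ)ᴴ * (ρ - σ)).trace).re)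

/-- von Neumann entropy `S(ρ) = -tr(ρ ln ρ) = -∑ᵢ λᵢ ln λᵢ`. -/
noncomputable def vnEntropy {d : ℕ} (ρ : Matrix (Fin d) (Fin d) ℂ) : ℝ :=
  -∑ i : Fin d, eigsInc ρ i * Real.log (eigsInc ρ i)

/-- `ψ ∈ ℂᵈ ⊗ ℂᵈ` is a purification of `ρ`. -/
def IsPurification {d : ℕ} (ρ : Matrix (Fin d) (Fin d) ℂ)
    (ψ : EuclideanSpace ℂ (Fin d × Fin d)) : Prop :=
  ‖ψ‖ = 1 ∧ ∀ i j, ρ i j = ∑ k : Fin d, ψ (i, k) * (starRingEnd ℂ) (ψ (j, k))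

/-- Partial trace over the second tensor factor of `|ψ⟩⟨ψ|`. -/
noncomputable def partialTrace {d : ℕ} (ψ : EuclideanSpace ℂ (Fin d × Fin d)) :
    Matrix (Fin d) (Fin d) ℂ :=
  Matrix.of fun i j => ∑ k : Fin d, ψ (i, k) * (starRingEnd ℂ) (ψ (j, k))


open scoped MatrixOrder in
lemma Matrix.PosSemidef.sqrt_eq_cfcSqrt {d : ℕ} {A : Matrix (Fin d) (Fin d) ℂ}
    (hA : A.PosSemidef) : hA.sqrt = CFC.sqrt A := by
  rw [CFC.sqrt_eq_real_sqrt A (Matrix.nonneg_iff_posSemidef.mpr hA), cfcₙ_eq_cfc, hA.1.cfc_eq]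
  rfl

open scoped MatrixOrder in
lemma Matrix.PosSemidef.posSemidef_sqrt {d : ℕ} {A : Matrix (Fin d) (Fin d) ℂ}
    (hA : A.PosSemidef) : hA.sqrt.PosSemidef := by
  rw [hA.sqrt_eq_cfcSqrt]
  exact Matrix.nonneg_iff_posSemidef.mp (CFC.sqrt_nonneg A)

open scoped MatrixOrder in
lemma Matrix.PosSemidef.sq_sqrt {d : ℕ} {A : Matrix (Fin d) (Fin d) ℂ}
    (hA : A.PosSemidef) : hA.sqrt ^ 2 = A := by
  rw [hA.sqrt_eq_cfcSqrt]
  exact CFC.sq_sqrt A (Matrix.nonneg_iff_posSemidef.mpr hA)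

open scoped MatrixOrder in
lemma Matrix.PosSemidef.eq_sqrt_of_sq_eq {d : ℕ} {B A : Matrix (Fin d) (Fin d) ℂ}
    (hB : B.PosSemidef) (hA : A.PosSemidef) (h : B ^ 2 = A) : B = hA.sqrt := by
  rw [hA.sqrt_eq_cfcSqrt]
  exact (CFC.sqrt_unique (by rw [← pow_two]; exact h) (Matrix.nonneg_iff_posSemidef.mpr hB)).symm


lemma trace_eq_sum_eigs {d : ℕ} {A : Matrix (Fin d) (Fin d) ℂ} (hA : A.IsHermitian) :
    A.trace = ∑ i, (hA.eigenvalues i : ℂ) := by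
  conv_lhs => rw [hA.spectral_theorem, Unitary.conjStarAlgAut_apply]
  rw [Matrix.trace_mul_cycle,
    (Matrix.mem_unitaryGroup_iff').mp hA.eigenvectorUnitary.2, one_mul, trace_diagonal]
  rfl

lemma traceNorm_herm {d : ℕ} {X : Matrix (Fin d) (Fin d) ℂ} (hX : X.IsHermitian) :
    traceNorm X = ∑ i, |hX.eigenvalues i| := by
  set U : Matrix (Fin d) (Fin d) ℂ := (hX.eigenvectorUnitary : Matrix (Fin d) (Fin d) ℂ) with hU
  have hUU : star U * U = 1 := (Matrix.mem_unitaryGroup_iff').mp hX.eigenvectorUnitary.2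
  have cancel : ∀ Z : Matrix (Fin d) (Fin d) ℂ, star U * (U * Z) = Z := by
    intro Z; rw [← mul_assoc, hUU, one_mul]
  set Dabs : Matrix (Fin d) (Fin d) ℂ := diagonal (fun i => ((|hX.eigenvalues i| : ℝ) : ℂ)) with hD
  set Y : Matrix (Fin d) (Fin d) ℂ := U * Dabs * star U with hY
  have hDpsd : Dabs.PosSemidef := by
    rw [hD, posSemidef_diagonal_iff]
    intro i
    exact Complex.zero_le_real.mpr (abs_nonneg _)
  have hYpsd : Y.PosSemidef := by
    have := hDpsd.mul_mul_conjTranspose_same U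
    simpa [Matrix.star_eq_conjTranspose, hY] using this
  have hsq : Y ^ 2 = Xᴴ * X := by
    have hXX : Xᴴ * X = X * X := by rw [hX.eq]
    rw [hXX]
    conv_rhs => rw [hX.spectral_theorem, Unitary.conjStarAlgAut_apply, ← hU]
    rw [hY, pow_two]
    simp only [mul_assoc, cancel]
    congr 1
    rw [← mul_assoc, ← mul_assoc]
    congr 1
    rw [hD, diagonal_mul_diagonal, diagonal_mul_diagonal]
    congr 1
    funext i
    have h2 : |hX.eigenvalues i| * |hX.eigenvalues i| = hX.eigenvalues i * hX.eigenvalues i :=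
      abs_mul_abs_self _
    simpa [Function.comp, ← Complex.ofReal_mul] using congrArg Complex.ofReal h2
  have hY_eq : Y = (Matrix.posSemidef_conjTranspose_mul_self X).sqrt :=
    hYpsd.eq_sqrt_of_sq_eq _ hsq
  have htr : Y.trace = ∑ i, ((|hX.eigenvalues i| : ℝ) : ℂ) := by
    rw [hY, Matrix.trace_mul_cycle, hUU, one_mul, trace_diagonal]
  rw [traceNorm, ← hY_eq, htr]
  simp

lemma sum_inner_sq {d : ℕ} (b : OrthonormalBasis (Fin d) ℂ (EuclideanSpace ℂ (Fin d)))
    (x : EuclideanSpace ℂ (Fin d)) :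
    ∑ i, ‖(inner ℂ (b i) x : ℂ)‖^2 = ‖x‖^2 := by
  have h := b.sum_inner_mul_inner x x
  have h2 : ∀ i, (inner ℂ x (b i) : ℂ) * inner ℂ (b i) x = ((‖(inner ℂ (b i) x : ℂ)‖^2 : ℝ) : ℂ) := by
    intro i
    rw [← inner_conj_symm x (b i), RCLike.conj_mul]
    norm_cast
  rw [Finset.sum_congr rfl (fun i _ => h2 i), inner_self_eq_norm_sq_to_K] at h
  norm_cast at h
  exact RCLike.ofReal_injective h

lemma quad_re {d : ℕ} {A : Matrix (Fin d) (Fin d) ℂ} (hA : A.IsHermitian)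
    (x : EuclideanSpace ℂ (Fin d)) :
    (star ((WithLp.equiv 2 (Fin d → ℂ)) x) ⬝ᵥ (A *ᵥ (WithLp.equiv 2 (Fin d → ℂ)) x)).re
      = ∑ l, hA.eigenvalues l * ‖(inner ℂ (hA.eigenvectorBasis l) x : ℂ)‖^2 := by
  have key : star ((WithLp.equiv 2 (Fin d → ℂ)) x) ⬝ᵥ (A *ᵥ (WithLp.equiv 2 (Fin d → ℂ)) x)
      = inner ℂ x ((Matrix.toEuclideanLin A) x) := by
    rw [EuclideanSpace.inner_eq_star_dotProduct, toEuclideanLin_apply]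
    simp
    exact dotProduct_comm _ _
  rw [key]
  have hwl : ∀ l, (Matrix.toEuclideanLin A) (hA.eigenvectorBasis l)
      = (hA.eigenvalues l : ℂ) • hA.eigenvectorBasis l := by
    intro l
    rw [toEuclideanLin_apply, hA.mulVec_eigenvectorBasis, WithLp.toLp_smul,
      WithLp.toLp_ofLp, RCLike.real_smul_eq_coe_smul (K := ℂ)]
    rfl
  have hx : (Matrix.toEuclideanLin A) x
      = ∑ l, ((inner ℂ (hA.eigenvectorBasis l) x : ℂ) * hA.eigenvalues l) • hA.eigenvectorBasis l := by
    conv_lhs => rw [← hA.eigenvectorBasis.sum_repr x]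
    rw [map_sum]
    congr 1
    funext l
    rw [LinearMap.map_smul, hA.eigenvectorBasis.repr_apply_apply, hwl l, smul_smul]
  rw [hx, inner_sum, Complex.re_sum]
  congr 1
  funext l
  rw [inner_smul_right,
    show ∀ z w : ℂ, ∀ r : ℝ, (z * r) * w = (r:ℂ) * (z * w) from by intros; ring,
    ← inner_conj_symm x (hA.eigenvectorBasis l), RCLike.mul_conj]
  show (((hA.eigenvalues l) : ℂ) * ((‖(inner ℂ (hA.eigenvectorBasis l) x : ℂ)‖ : ℝ) : ℂ) ^ 2).re
      = hA.eigenvalues l * ‖(inner ℂ (hA.eigenvectorBasis l) x : ℂ)‖ ^ 2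
  norm_cast

lemma sum_filter_lt {d m : ℕ} (hm : m ≤ d) (f : Fin d → ℝ) :
    ∑ k ∈ Finset.univ.filter (fun k : Fin d => (k : ℕ) < m), f k
      = ∑ j ∈ Finset.range m, (if h : j < d then f ⟨j, h⟩ else 0) := by
  rw [Finset.sum_filter]
  have h1 : ∀ k : Fin d, (if (k : ℕ) < m then f k else 0)
      = (fun j => if j < m then (if h : j < d then f ⟨j, h⟩ else 0) else 0) (k : ℕ) := by
    intro k
    simp only [k.isLt, dif_pos, Fin.eta]
  rw [Finset.sum_congr rfl (fun k _ => h1 k),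
    Fin.sum_univ_eq_sum_range (fun j => if j < m then (if h : j < d then f ⟨j, h⟩ else 0) else 0) d]
  rw [← Finset.sum_subset (Finset.range_subset_range.2 hm)
    (fun j _ hj => by rw [if_neg (by simpa using hj)])]
  exact Finset.sum_congr rfl fun j hj => by rw [if_pos (Finset.mem_range.1 hj)]

lemma sum_ind_lt {d m : ℕ} (hm : m ≤ d) :
    ∑ k : Fin d, (if (k : ℕ) < m then (1:ℝ) else 0) = m := by
  rw [← Finset.sum_filter, sum_filter_lt hm (fun _ => (1:ℝ))]
  rw [Finset.sum_congr rfl (fun j hj => dif_pos (lt_of_lt_of_le (Finset.mem_range.1 hj) hm))]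
  simp

lemma L3 {d m : ℕ} (hm : m ≤ d) (B Q : Fin d → ℝ) (hBa : Antitone B) (hB0 : ∀ k, 0 ≤ B k)
    (hQ0 : ∀ k, 0 ≤ Q k) (hQ1 : ∀ k, Q k ≤ 1) (hQs : ∑ k, Q k = m) :
    ∑ k, B k * Q k ≤ ∑ k ∈ Finset.univ.filter (fun k : Fin d => (k : ℕ) < m), B k := by
  rcases eq_or_lt_of_le hm with heq | hlt
  · subst heq
    have hfilt : Finset.univ.filter (fun k : Fin m => (k : ℕ) < m) = Finset.univ :=
      Finset.filter_true_of_mem fun k _ => k.isLt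
    rw [hfilt]
    refine Finset.sum_le_sum fun k _ => ?_
    nlinarith [hB0 k, hQ1 k, hQ0 k]
  · set c := B ⟨m, hlt⟩ with hc
    have key : ∀ k : Fin d, B k * Q k - (if (k : ℕ) < m then B k else 0)
        ≤ c * (Q k - if (k : ℕ) < m then 1 else 0) := by
      intro k
      by_cases h : (k : ℕ) < m
      · rw [if_pos h, if_pos h]
        have hBk : c ≤ B k := hBa (by rw [Fin.le_def]; exact Nat.le_of_lt h)
        nlinarith [hQ1 k]
      · rw [if_neg h, if_neg h]
        have hBk : B k ≤ c := hBa (by rw [Fin.le_def]; exact Nat.le_of_not_lt h)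
        nlinarith [hQ0 k]
    have h2 := Finset.sum_le_sum fun k (_ : k ∈ Finset.univ) => key k
    rw [Finset.sum_sub_distrib, ← Finset.mul_sum, Finset.sum_sub_distrib, hQs,
      sum_ind_lt hm, sub_self, mul_zero, ← Finset.sum_filter] at h2
    linarith


lemma eigsDec_eq {d : ℕ} {A : Matrix (Fin d) (Fin d) ℂ} (hA : A.IsHermitian) (k : Fin d) :
    eigsDec A k = hA.eigenvalues (Tuple.sort hA.eigenvalues k.rev) := by
  rw [eigsDec, eigsInc, dif_pos hA]
  rfl

lemma kf_X {d : ℕ} {X : Matrix (Fin d) (Fin d) ℂ} (hX : X.IsHermitian) (h0 : X.trace = 0)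
    (u : OrthonormalBasis (Fin d) ℂ (EuclideanSpace ℂ (Fin d))) (S : Finset (Fin d)) :
    ∑ i ∈ S, (star ((WithLp.equiv 2 (Fin d → ℂ)) (u i)) ⬝ᵥ
        (X *ᵥ (WithLp.equiv 2 (Fin d → ℂ)) (u i))).re
      ≤ traceNorm X / 2 := by
  rw [Finset.sum_congr rfl (fun i (_ : i ∈ S) => quad_re hX (u i)), Finset.sum_comm]
  set μ := hX.eigenvalues with hμ
  set p : Fin d → ℝ := fun l => ∑ i ∈ S, ‖(inner ℂ (hX.eigenvectorBasis l) (u i) : ℂ)‖^2 with hp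
  have hp0 : ∀ l, 0 ≤ p l := fun l => Finset.sum_nonneg fun i _ => sq_nonneg _
  have hp1 : ∀ l, p l ≤ 1 := by
    intro l
    have hle : p l ≤ ∑ i : Fin d, ‖(inner ℂ (hX.eigenvectorBasis l) (u i) : ℂ)‖^2 :=
      Finset.sum_le_sum_of_subset_of_nonneg (Finset.subset_univ S) (fun i _ _ => sq_nonneg _)
    have h2 : ∑ i : Fin d, ‖(inner ℂ (hX.eigenvectorBasis l) (u i) : ℂ)‖^2
        = ∑ i : Fin d, ‖(inner ℂ (u i) (hX.eigenvectorBasis l) : ℂ)‖^2 :=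
      Finset.sum_congr rfl fun i _ => by rw [norm_inner_symm]
    have h3 := sum_inner_sq u (hX.eigenvectorBasis l)
    have h4 : ‖hX.eigenvectorBasis l‖ = 1 := hX.eigenvectorBasis.orthonormal.1 l
    rw [h2, h3, h4] at hle
    simpa using hle
  have hterm : ∀ l : Fin d, ∑ i ∈ S, μ l * ‖(inner ℂ (hX.eigenvectorBasis l) (u i) : ℂ)‖^2
      = μ l * p l := fun l => (Finset.mul_sum _ _ _).symm
  rw [Finset.sum_congr rfl (fun l (_ : l ∈ Finset.univ) => hterm l)]
  have key : ∀ l : Fin d, μ l * p l ≤ |μ l| / 2 + μ l / 2 := by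
    intro l
    rcases le_or_gt 0 (μ l) with h | h
    · rw [abs_of_nonneg h]; nlinarith [hp1 l, hp0 l]
    · rw [abs_of_neg h]; nlinarith [hp0 l, hp1 l]
  calc ∑ l, μ l * p l ≤ ∑ l, (|μ l| / 2 + μ l / 2) := Finset.sum_le_sum fun l _ => key l
    _ = (∑ l, |μ l|) / 2 + (∑ l, μ l) / 2 := by
        rw [Finset.sum_add_distrib, Finset.sum_div, Finset.sum_div]
    _ = traceNorm X / 2 := by
        have hμ0 : ∑ l, μ l = 0 := by
          have h5 := trace_eq_sum_eigs hX
          rw [h0] at h5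
          exact_mod_cast h5.symm
        rw [traceNorm_herm hX, hμ0]
        ring

lemma kf_sigma {d : ℕ} {σ : Matrix (Fin d) (Fin d) ℂ} (hσ : σ.PosSemidef)
    (u : OrthonormalBasis (Fin d) ℂ (EuclideanSpace ℂ (Fin d))) (S : Finset (Fin d)) :
    ∑ i ∈ S, (star ((WithLp.equiv 2 (Fin d → ℂ)) (u i)) ⬝ᵥ
        (σ *ᵥ (WithLp.equiv 2 (Fin d → ℂ)) (u i))).re
      ≤ ∑ k ∈ Finset.univ.filter (fun k : Fin d => (k : ℕ) < S.card), eigsDec σ k := by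
  have hσh : σ.IsHermitian := hσ.isHermitian
  rw [Finset.sum_congr rfl (fun i (_ : i ∈ S) => quad_re hσh (u i)), Finset.sum_comm]
  set b := hσh.eigenvalues with hb
  set q : Fin d → ℝ := fun l => ∑ i ∈ S, ‖(inner ℂ (hσh.eigenvectorBasis l) (u i) : ℂ)‖^2 with hq
  have hterm : ∀ l : Fin d, ∑ i ∈ S, b l * ‖(inner ℂ (hσh.eigenvectorBasis l) (u i) : ℂ)‖^2
      = b l * q l := fun l => (Finset.mul_sum _ _ _).symm
  rw [Finset.sum_congr rfl (fun l (_ : l ∈ Finset.univ) => hterm l)]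
  have hq0 : ∀ l, 0 ≤ q l := fun l => Finset.sum_nonneg fun i _ => sq_nonneg _
  have hq1 : ∀ l, q l ≤ 1 := by
    intro l
    have hle : q l ≤ ∑ i : Fin d, ‖(inner ℂ (hσh.eigenvectorBasis l) (u i) : ℂ)‖^2 :=
      Finset.sum_le_sum_of_subset_of_nonneg (Finset.subset_univ S) (fun i _ _ => sq_nonneg _)
    have h2 : ∑ i : Fin d, ‖(inner ℂ (hσh.eigenvectorBasis l) (u i) : ℂ)‖^2
        = ∑ i : Fin d, ‖(inner ℂ (u i) (hσh.eigenvectorBasis l) : ℂ)‖^2 :=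
      Finset.sum_congr rfl fun i _ => by rw [norm_inner_symm]
    have h3 := sum_inner_sq u (hσh.eigenvectorBasis l)
    have h4 : ‖hσh.eigenvectorBasis l‖ = 1 := hσh.eigenvectorBasis.orthonormal.1 l
    rw [h2, h3, h4] at hle
    simpa using hle
  have hqs : ∑ l, q l = S.card := by
    rw [hq, Finset.sum_comm]
    have : ∀ i : Fin d, ∑ l, ‖(inner ℂ (hσh.eigenvectorBasis l) (u i) : ℂ)‖^2 = 1 := by
      intro i
      rw [sum_inner_sq hσh.eigenvectorBasis (u i), u.orthonormal.1 i]
      norm_num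
    rw [Finset.sum_congr rfl (fun i (_ : i ∈ S) => this i)]
    simp
  set e : Equiv.Perm (Fin d) := (Fin.revPerm).trans (Tuple.sort b) with he
  have hsum : ∑ l, b l * q l = ∑ k, b (e k) * q (e k) := (Equiv.sum_comp e fun l => b l * q l).symm
  rw [hsum]
  have hcard : S.card ≤ d := by simpa using Finset.card_le_univ S
  have hBa : Antitone (fun k => b (e k)) := by
    intro k k' hkk'
    exact Tuple.monotone_sort b (Fin.rev_le_rev.mpr hkk')
  have hres := L3 hcard (fun k => b (e k)) (fun k => q (e k)) hBa
    (fun k => hσ.eigenvalues_nonneg (e k)) (fun k => hq0 _) (fun k => hq1 _)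
    ((Equiv.sum_comp e q).trans hqs)
  refine hres.trans_eq (Finset.sum_congr rfl fun k _ => ?_)
  rw [eigsDec_eq hσh k]
  rfl

lemma card_filter_lt {d m : ℕ} (hm : m ≤ d) :
    (Finset.univ.filter (fun k : Fin d => (k : ℕ) < m)).card = m := by
  have h1 := sum_ind_lt (d := d) hm
  rw [Finset.sum_boole] at h1
  exact_mod_cast h1

lemma sum_eigsDec {d : ℕ} {A : Matrix (Fin d) (Fin d) ℂ} (hA : A.IsHermitian) :
    ∑ k, eigsDec A k = A.trace.re := by
  rw [Finset.sum_congr rfl (fun k (_ : k ∈ Finset.univ) => eigsDec_eq hA k),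
    show (∑ k : Fin d, hA.eigenvalues (Tuple.sort hA.eigenvalues k.rev))
        = ∑ l, hA.eigenvalues l from
      Equiv.sum_comp ((Fin.revPerm).trans (Tuple.sort hA.eigenvalues)) hA.eigenvalues,
    trace_eq_sum_eigs hA]
  rw [← Complex.ofReal_sum]
  exact (Complex.ofReal_re _).symm

lemma partial_le {d : ℕ} {ρ σ : Matrix (Fin d) (Fin d) ℂ} (hρ : ρ.PosSemidef) (hσ : σ.PosSemidef)
    (htr : ρ.trace = σ.trace) {m : ℕ} (hm : m ≤ d) :
    ∑ k ∈ Finset.univ.filter (fun k : Fin d => (k : ℕ) < m), eigsDec ρ k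
      ≤ ∑ k ∈ Finset.univ.filter (fun k : Fin d => (k : ℕ) < m), eigsDec σ k
        + traceNorm (ρ - σ) / 2 := by
  have hρh := hρ.isHermitian
  set u := hρh.eigenvectorBasis with hu
  set e : Equiv.Perm (Fin d) := (Fin.revPerm).trans (Tuple.sort hρh.eigenvalues) with he
  set F := Finset.univ.filter (fun k : Fin d => (k : ℕ) < m) with hF
  set S := F.map e.toEmbedding with hS
  have hSc : S.card = m := by rw [hS, Finset.card_map, hF, card_filter_lt hm]
  have hL : ∑ k ∈ F, eigsDec ρ k = ∑ i ∈ S, hρh.eigenvalues i := by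
    rw [hS, Finset.sum_map]
    exact Finset.sum_congr rfl fun k _ => by rw [eigsDec_eq hρh k]; rfl
  have hsplit : ∀ i : Fin d, hρh.eigenvalues i
      = (star ((WithLp.equiv 2 (Fin d → ℂ)) (u i)) ⬝ᵥ
          (σ *ᵥ (WithLp.equiv 2 (Fin d → ℂ)) (u i))).re
        + (star ((WithLp.equiv 2 (Fin d → ℂ)) (u i)) ⬝ᵥ
          ((ρ - σ) *ᵥ (WithLp.equiv 2 (Fin d → ℂ)) (u i))).re := by
    intro i
    have h1 : hρh.eigenvalues i = (star ((WithLp.equiv 2 (Fin d → ℂ)) (u i)) ⬝ᵥ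
        (ρ *ᵥ (WithLp.equiv 2 (Fin d → ℂ)) (u i))).re := hρh.eigenvalues_eq i
    rw [h1]
    conv_lhs => rw [show ρ = σ + (ρ - σ) from by rw [add_sub_cancel]]
    rw [add_mulVec, dotProduct_add, Complex.add_re]
  have hX : (ρ - σ).IsHermitian := hρh.sub hσ.isHermitian
  have hX0 : (ρ - σ).trace = 0 := by rw [trace_sub, htr, sub_self]
  calc ∑ k ∈ F, eigsDec ρ k = ∑ i ∈ S, hρh.eigenvalues i := hL
    _ = (∑ i ∈ S, (star ((WithLp.equiv 2 (Fin d → ℂ)) (u i)) ⬝ᵥ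
          (σ *ᵥ (WithLp.equiv 2 (Fin d → ℂ)) (u i))).re)
        + ∑ i ∈ S, (star ((WithLp.equiv 2 (Fin d → ℂ)) (u i)) ⬝ᵥ
          ((ρ - σ) *ᵥ (WithLp.equiv 2 (Fin d → ℂ)) (u i))).re := by
        rw [← Finset.sum_add_distrib]
        exact Finset.sum_congr rfl fun i _ => hsplit i
    _ ≤ (∑ k ∈ Finset.univ.filter (fun k : Fin d => (k : ℕ) < S.card), eigsDec σ k)
        + traceNorm (ρ - σ) / 2 :=
        add_le_add (kf_sigma hσ u S) (kf_X hX hX0 u S)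
    _ = _ := by rw [hSc]


lemma traceNorm_congr {d : ℕ} {A B : Matrix (Fin d) (Fin d) ℂ} (h : Aᴴ * A = Bᴴ * B) :
    traceNorm A = traceNorm B := by
  have h1 : (Matrix.posSemidef_conjTranspose_mul_self A).sqrt
      = (Matrix.posSemidef_conjTranspose_mul_self B).sqrt := by
    apply Matrix.PosSemidef.eq_sqrt_of_sq_eq
      (Matrix.posSemidef_conjTranspose_mul_self A).posSemidef_sqrt
    rw [Matrix.PosSemidef.sq_sqrt, h]
  rw [traceNorm, traceNorm, h1]

/-- The difference of passive-state energies is bounded by the trace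
distance: `|∑ᵢ (λᵢ(ρ) − λᵢ(σ)) Eᵢ| ≤ (E_{d−1} − E_0) D_Tr(ρ,σ)`, with `λ` in
decreasing and `E` in increasing order. -/
theorem passive_energy_diff_le_traceDist {d : ℕ} (hd : 0 < d)
    (ρ σ H : Matrix (Fin d) (Fin d) ℂ)
    (hρ : ρ.PosSemidef) (hρ1 : ρ.trace = 1)
    (hσ : σ.PosSemidef) (hσ1 : σ.trace = 1)
    (hH : H.IsHermitian) :
    |∑ i : Fin d, (eigsDec ρ i - eigsDec σ i) * eigsInc H i| ≤
      (eigsInc H ⟨d - 1, by omega⟩ - eigsInc H ⟨0, hd⟩) * traceDist ρ σ := by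

  have hρh := hρ.isHermitian
  have hσh := hσ.isHermitian
  have hXh : (ρ - σ).IsHermitian := hρh.sub hσh
  set D := traceNorm (ρ - σ) / 2 with hD
  have hD0 : 0 ≤ D := by
    rw [hD, traceNorm_herm hXh]
    positivity
  set cρ : ℕ → ℝ := fun j => if h : j < d then eigsDec ρ ⟨j, h⟩ else 0 with hcρ
  set cσ : ℕ → ℝ := fun j => if h : j < d then eigsDec σ ⟨j, h⟩ else 0 with hcσ
  set g : ℕ → ℝ := fun j => cρ j - cσ j with hg
  set f : ℕ → ℝ := fun j => eigsInc H ⟨min j (d-1), by omega⟩ with hf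
  have hEinc : eigsInc H = hH.eigenvalues ∘ Tuple.sort hH.eigenvalues := by
    rw [eigsInc, dif_pos hH]
  have hEmono : Monotone (eigsInc H) := by
    rw [hEinc]; exact Tuple.monotone_sort hH.eigenvalues
  have hmono : ∀ i j : ℕ, i ≤ j → f i ≤ f j := by
    intro i j hij
    rw [hf]
    exact hEmono (by rw [Fin.mk_le_mk]; exact min_le_min hij (le_refl _))
  have hmain : ∑ i : Fin d, (eigsDec ρ i - eigsDec σ i) * eigsInc H i
      = ∑ j ∈ Finset.range d, f j • g j := by
    rw [← Fin.sum_univ_eq_sum_range (fun j => f j • g j) d]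
    refine Finset.sum_congr rfl fun k _ => ?_
    have h1 : (⟨min (k : ℕ) (d-1), by omega⟩ : Fin d) = k := by
      ext
      simp only []
      omega
    rw [hf, hg, hcρ, hcσ]
    dsimp only
    simp only [dif_pos k.isLt, Fin.eta, h1, smul_eq_mul]
    ring
  have hcρval : ∀ k : Fin d, cρ (k : ℕ) = eigsDec ρ k := by
    intro k; rw [hcρ]; dsimp only; rw [dif_pos k.isLt, Fin.eta]
  have hcσval : ∀ k : Fin d, cσ (k : ℕ) = eigsDec σ k := by
    intro k; rw [hcσ]; dsimp only; rw [dif_pos k.isLt, Fin.eta]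
  have htrS : traceNorm (σ - ρ) = traceNorm (ρ - σ) := by
    apply traceNorm_congr
    rw [show σ - ρ = -(ρ - σ) from (neg_sub ρ σ).symm, conjTranspose_neg, neg_mul_neg]
  have hS : ∀ m : ℕ, m ≤ d → |∑ j ∈ Finset.range m, g j| ≤ D := by
    intro m hm
    have hgp : ∑ j ∈ Finset.range m, cρ j
        = ∑ k ∈ Finset.univ.filter (fun k : Fin d => (k : ℕ) < m), eigsDec ρ k :=
      (sum_filter_lt hm _).symm
    have hgq : ∑ j ∈ Finset.range m, cσ j
        = ∑ k ∈ Finset.univ.filter (fun k : Fin d => (k : ℕ) < m), eigsDec σ k :=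
      (sum_filter_lt hm _).symm
    have h1 := partial_le hρ hσ (by rw [hρ1, hσ1]) hm
    have h2 := partial_le hσ hρ (by rw [hρ1, hσ1]) hm
    rw [htrS] at h2
    rw [hg, Finset.sum_sub_distrib, abs_le, hgp, hgq]
    constructor <;> [linarith; linarith]
  have hGd : ∑ j ∈ Finset.range d, g j = 0 := by
    have e1 : ∑ j ∈ Finset.range d, cρ j = 1 := by
      rw [← Fin.sum_univ_eq_sum_range cρ d, Finset.sum_congr rfl (fun k _ => hcρval k),
        sum_eigsDec hρh, hρ1, Complex.one_re]
    have e2 : ∑ j ∈ Finset.range d, cσ j = 1 := by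
      rw [← Fin.sum_univ_eq_sum_range cσ d, Finset.sum_congr rfl (fun k _ => hcσval k),
        sum_eigsDec hσh, hσ1, Complex.one_re]
    rw [hg, Finset.sum_sub_distrib, e1, e2, sub_self]
  have habel := Finset.sum_range_by_parts f g d
  rw [hmain, habel, hGd, smul_zero, zero_sub, abs_neg]
  have hbound : |∑ i ∈ Finset.range (d-1), (f (i+1) - f i) • (∑ j ∈ Finset.range (i+1), g j)|
      ≤ ∑ i ∈ Finset.range (d-1), (f (i+1) - f i) * D := by
    refine (Finset.abs_sum_le_sum_abs _ _).trans (Finset.sum_le_sum fun i hi => ?_)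
    rw [smul_eq_mul, abs_mul, abs_of_nonneg (sub_nonneg.2 (hmono i (i+1) (Nat.le_succ i)))]
    refine mul_le_mul_of_nonneg_left (hS (i+1) ?_) (sub_nonneg.2 (hmono i (i+1) (Nat.le_succ i)))
    have := Finset.mem_range.1 hi
    omega
  refine hbound.trans ?_
  rw [← Finset.sum_mul, Finset.sum_range_sub f (d-1)]
  have hf0 : f 0 = eigsInc H ⟨0, hd⟩ := by
    rw [hf]; exact congrArg (eigsInc H) (Fin.ext (by simp))
  have hfd : f (d-1) = eigsInc H ⟨d - 1, by omega⟩ := by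
    rw [hf]; exact congrArg (eigsInc H) (Fin.ext (by simp))
  rw [hf0, hfd]
  exact le_of_eq rfl
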